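/- Let H' be a finite nonempty set of hypotheses h : X → {0,1}, let ε > 0 and n ∈ ℕ, and define the exponential mechanism M that, on input a labeled dataset S ∈ (X×{0,1})^n, outputs each h ∈ H' with probability proportional to exp(−(ε·n/2)·ê(h; S)), where ê(h; S) is the empirical error of h on S. Then M is pure ε-differentially private: for every pair of datasets S, S' ∈ (X×{0,1})^n differing in exactly one entry and every h ∈ H', Pr[M(S) = h] ≤ e^ε·Pr[M(S') = h]. -/

import Mathlib

noncomputable section

/-- Two datasets differ in exactly one entry. -/
def Adjacent {Z : Type*} {n : ℕ} (S S' : Fin n → Z) : Prop :=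
  ∃ i : Fin n, S i ≠ S' i ∧ ∀ j : Fin n, j ≠ i → S j = S' j

/-- The empirical error of `h` on a labeled dataset `S`. -/
def empErr {X : Type*} {n : ℕ} (h : X → Bool) (S : Fin n → X × Bool) : ℝ :=
  (∑ i : Fin n, if h (S i).1 ≠ (S i).2 then (1 : ℝ) else 0) / n

/-- The probability that the exponential mechanism with score `-ê(·; S)` and privacy
parameter `ε` over the finite class `H'` outputs the hypothesis `h`: proportional
to `exp(-(ε n / 2) ê(h; S))`. -/
def expMechProb {X : Type*} {n : ℕ} (H' : Finset (X → Bool)) (ε : ℝ)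
    (S : Fin n → X × Bool) (h : X → Bool) : ℝ :=
  Real.exp (-(ε * n / 2) * empErr h S) /
    ∑ h' ∈ H', Real.exp (-(ε * n / 2) * empErr h' S)

/-!
Changing one of the `n` examples changes the empirical error of every hypothesis by at most
`1 / n`, so each weight `exp (-(ε n / 2) ê(h; S))` changes by a factor at most `e^(ε/2)`.
The normalizing sum then also changes by a factor at most `e^(ε/2)`, and the two factors
multiply to `e^ε`.
-/

open Finset

namespace Adjacent

variable {Z : Type*} {n : ℕ} {S S' : Fin n → Z}

theorem symm (hadj : Adjacent S S') : Adjacent S' S := by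
  obtain ⟨i, hne, hj⟩ := hadj
  exact ⟨i, hne.symm, fun j hji => (hj j hji).symm⟩

theorem pos (hadj : Adjacent S S') : 0 < n := by
  obtain ⟨i, -, -⟩ := hadj
  exact i.pos

theorem sum_le_sum_add_one (hadj : Adjacent S S') {f : Z → ℝ}
    (hf_nonneg : ∀ z, 0 ≤ f z) (hf_le_one : ∀ z, f z ≤ 1) :
    ∑ j, f (S j) ≤ ∑ j, f (S' j) + 1 := by
  obtain ⟨i, -, hj⟩ := hadj
  have h_rest : ∑ j ∈ univ.erase i, f (S j) = ∑ j ∈ univ.erase i, f (S' j) :=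
    sum_congr rfl fun j hj_mem => by rw [hj j (ne_of_mem_erase hj_mem)]
  rw [← add_sum_erase _ _ (mem_univ i), ← add_sum_erase _ _ (mem_univ i), h_rest]
  linarith [hf_le_one (S i), hf_nonneg (S' i)]

end Adjacent

theorem empErr_le_add_of_adjacent {X : Type*} {n : ℕ} (h : X → Bool)
    {S S' : Fin n → X × Bool} (hadj : Adjacent S S') :
    empErr h S ≤ empErr h S' + 1 / n := by
  have hsum := hadj.sum_le_sum_add_one (f := fun z => if h z.1 ≠ z.2 then (1 : ℝ) else 0)
    (fun _ => by split_ifs <;> norm_num) (fun _ => by split_ifs <;> norm_num)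
  rw [empErr, empErr, ← add_div]
  gcongr

theorem exp_neg_mul_le_exp_mul_mul {c a b Δ : ℝ} (hc : 0 ≤ c) (hba : b ≤ a + Δ) :
    Real.exp (-c * a) ≤ Real.exp (c * Δ) * Real.exp (-c * b) := by
  rw [← Real.exp_add, Real.exp_le_exp]
  nlinarith

theorem exp_neg_mul_empErr_le_of_adjacent {X : Type*} {n : ℕ} {ε : ℝ} (hε : 0 ≤ ε)
    {S S' : Fin n → X × Bool} (hadj : Adjacent S S') (h : X → Bool) :
    Real.exp (-(ε * n / 2) * empErr h S) ≤
      Real.exp (ε / 2) * Real.exp (-(ε * n / 2) * empErr h S') := by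
  have hn : (n : ℝ) ≠ 0 := by exact_mod_cast hadj.pos.ne'
  have hscale : ε * n / 2 * (1 / n) = ε / 2 := by field_simp
  rw [← hscale]
  exact exp_neg_mul_le_exp_mul_mul (by positivity) (empErr_le_add_of_adjacent h hadj.symm)

theorem div_sum_le_sq_mul_div_sum {ι : Type*} (s : Finset ι) {f g : ι → ℝ} {r : ℝ}
    (hr : 0 < r) (hf : ∀ j, 0 ≤ f j) (hg : ∀ j, 0 ≤ g j)
    (hfg : ∀ j, f j ≤ r * g j) (hgf : ∀ j, g j ≤ r * f j) (i : ι) :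
    f i / ∑ j ∈ s, f j ≤ r ^ 2 * (g i / ∑ j ∈ s, g j) := by
  rcases (sum_nonneg fun j _ => hf j : 0 ≤ ∑ j ∈ s, f j).eq_or_lt with hf0 | hf_pos
  · rw [← hf0, div_zero]
    exact mul_nonneg (sq_nonneg r) (div_nonneg (hg i) (sum_nonneg fun j _ => hg j))
  have hsum_fg : ∑ j ∈ s, f j ≤ r * ∑ j ∈ s, g j := by
    rw [mul_sum]; exact sum_le_sum fun j _ => hfg j
  have hsum_gf : ∑ j ∈ s, g j ≤ r * ∑ j ∈ s, f j := by
    rw [mul_sum]; exact sum_le_sum fun j _ => hgf j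
  have hg_pos : 0 < ∑ j ∈ s, g j := pos_of_mul_pos_right (hf_pos.trans_le hsum_fg) hr.le
  calc f i / ∑ j ∈ s, f j ≤ r * g i / ∑ j ∈ s, f j := by gcongr; exact hfg i
    _ = r ^ 2 * g i / (r * ∑ j ∈ s, f j) := by field_simp
    _ ≤ r ^ 2 * g i / ∑ j ∈ s, g j := by gcongr; exact mul_nonneg (sq_nonneg r) (hg i)
    _ = r ^ 2 * (g i / ∑ j ∈ s, g j) := mul_div_assoc _ _ _

theorem expMech_private_general {X : Type*} {n : ℕ} (H' : Finset (X → Bool))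
    (ε : ℝ) (hε : 0 < ε)
    (S S' : Fin n → X × Bool) (hadj : Adjacent S S') (h : X → Bool) :
    expMechProb H' ε S h ≤ Real.exp ε * expMechProb H' ε S' h := by
  have hexp : Real.exp ε = Real.exp (ε / 2) ^ 2 := by
    rw [sq, ← Real.exp_add, add_halves]
  rw [hexp]
  exact div_sum_le_sq_mul_div_sum H' (Real.exp_pos _) (fun _ => (Real.exp_pos _).le)
    (fun _ => (Real.exp_pos _).le) (exp_neg_mul_empErr_le_of_adjacent hε.le hadj)
    (exp_neg_mul_empErr_le_of_adjacent hε.le hadj.symm) h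

/-- **Privacy of the exponential mechanism** (Lemma 3.2 / KLNRS08): the exponential
mechanism over a finite nonempty class `H'` with score `-ê(·; S)` is pure
`ε`-differentially private: for adjacent datasets `S, S'` and every `h ∈ H'`,
`Pr[M(S) = h] ≤ e^ε Pr[M(S') = h]`. -/
theorem expMech_private {X : Type*} {n : ℕ} (H' : Finset (X → Bool))
    (hH' : H'.Nonempty) (ε : ℝ) (hε : 0 < ε)
    (S S' : Fin n → X × Bool) (hadj : Adjacent S S') (h : X → Bool) (hh : h ∈ H') :
    expMechProb H' ε S h ≤ Real.exp ε * expMechProb H' ε S' h :=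
  expMech_private_general H' ε hε S S' hadj h
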